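/- arXiv:0810.2445 — 3 statements merged into one kernel-verified Lean document; each statement's English description precedes it below -/
import Mathlib

section
/- Define h_m ∈ ℤ[x1,x2] as the coefficient of z^m in (1 - 2x2·z)(1 - (x1+x2)·z)/((1 - x2·z)(1 - 3x1·z)) (with h_m = 0 for m < 0). Then for every integer r ≥ 2, the 2×2 determinant h_r·h_r - h_(r+1)·h_(r-1) equals -3^(r-2)·(x2 - 2x1)·(x1·x2)^(r-1)·(3x1 - 2x2). -/
/-!
Clearing denominators, the coefficients `h m` of `(1 - c z)(1 - d z) / ((1 - a z)(1 - b z))`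
satisfy `h (m + 2) = (a + b) h (m + 1) - a b h m` for `m ≥ 1`. Along any such recurrence the
determinant `h m ^ 2 - h (m + 1) h (m - 1)` is multiplied by `a b` at each step, and its first
value `h 2 ^ 2 - h 3 h 1` is the resultant `(a - c)(a - d)(b - c)(b - d)` of the two alphabets.
Here `a b = 3 x₁ x₂` and the resultant is `-x₁ x₂ (x₂ - 2 x₁)(3 x₁ - 2 x₂)`.
-/

noncomputable section

abbrev R7 : Type := MvPolynomial (Fin 2) ℤ

def x₁ : R7 := MvPolynomial.X 0
def x₂ : R7 := MvPolynomial.X 1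

section QuadraticDenominator

open PowerSeries

variable {R : Type*} [CommRing R]

lemma coeff_zero_one_sub_mul_one_sub_mul (a b : R) (f : R⟦X⟧) :
    coeff 0 ((1 - C a * X) * (1 - C b * X) * f) = coeff 0 f := by
  simp [sub_mul, mul_assoc]

lemma coeff_one_one_sub_mul_one_sub_mul (a b : R) (f : R⟦X⟧) :
    coeff 1 ((1 - C a * X) * (1 - C b * X) * f) = coeff 1 f - (a + b) * coeff 0 f := by
  simp only [sub_mul, one_mul, mul_assoc, map_sub, coeff_C_mul, coeff_succ_X_mul,
    coeff_zero_eq_constantCoeff, map_mul, constantCoeff_X, zero_mul, mul_zero,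
    sub_zero]
  ring

lemma coeff_add_two_one_sub_mul_one_sub_mul (a b : R) (f : R⟦X⟧) (n : ℕ) :
    coeff (n + 2) ((1 - C a * X) * (1 - C b * X) * f) =
      coeff (n + 2) f - (a + b) * coeff (n + 1) f + a * b * coeff n f := by
  simp only [sub_mul, one_mul, mul_assoc, map_sub, coeff_C_mul, coeff_succ_X_mul]
  ring

lemma sq_sub_mul_eq_pow_mul_of_recurrence {u : ℕ → R} {p q : R}
    (hu : ∀ n, u (n + 2) = p * u (n + 1) - q * u n) (n : ℕ) :
    u (n + 1) ^ 2 - u (n + 2) * u n = q ^ n * (u 1 ^ 2 - u 2 * u 0) := by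
  induction n with
  | zero => simp
  | succ n ih =>
    linear_combination q * ih - u (n + 1) * hu (n + 1) + u (n + 2) * hu n

theorem coeff_sq_sub_coeff_mul_coeff_of_mul_eq {a b c d : R} {f : R⟦X⟧}
    (hf : (1 - C a * X) * (1 - C b * X) * f = (1 - C c * X) * (1 - C d * X)) (n : ℕ) :
    coeff (n + 2) f ^ 2 - coeff (n + 3) f * coeff (n + 1) f =
      (a * b) ^ n * ((a - c) * (a - d) * (b - c) * (b - d)) := by
  -- writing the right side as `_ * 1` lets the same coefficient lemmas expand both sides
  have hcoeff (m : ℕ) : coeff m ((1 - C a * X) * (1 - C b * X) * f) =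
      coeff m ((1 - C c * X) * (1 - C d * X) * 1) := by
    rw [hf, mul_one]
  have h0 : coeff 0 f = 1 := by
    simpa only [coeff_zero_one_sub_mul_one_sub_mul, coeff_zero_one] using hcoeff 0
  have h1 : coeff 1 f = a + b - (c + d) := by
    have := hcoeff 1
    rw [coeff_one_one_sub_mul_one_sub_mul, coeff_one_one_sub_mul_one_sub_mul] at this
    simp only [h0, mul_one, coeff_one, one_ne_zero, ↓reduceIte] at this
    linear_combination this
  have h2 : coeff 2 f = (a + b) * coeff 1 f - a * b + c * d := by
    have := hcoeff (0 + 2)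
    rw [coeff_add_two_one_sub_mul_one_sub_mul, coeff_add_two_one_sub_mul_one_sub_mul] at this
    simp only [zero_add, h0, mul_one, coeff_one, OfNat.ofNat_ne_zero, one_ne_zero, ↓reduceIte,
      mul_zero] at this
    linear_combination this
  have hrec (k : ℕ) :
      coeff (k + 1 + 2) f = (a + b) * coeff (k + 1 + 1) f - a * b * coeff (k + 1) f := by
    have := hcoeff (k + 1 + 2)
    rw [coeff_add_two_one_sub_mul_one_sub_mul, coeff_add_two_one_sub_mul_one_sub_mul] at this
    simp only [coeff_one, Nat.add_eq_zero_iff, one_ne_zero, OfNat.ofNat_ne_zero, and_false,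
      ↓reduceIte, mul_zero] at this
    linear_combination this
  have h3 : coeff 3 f = (a + b) * coeff 2 f - a * b * coeff 1 f := hrec 0
  rw [sq_sub_mul_eq_pow_mul_of_recurrence (u := fun k ↦ coeff (k + 1) f) hrec n]
  simp only [zero_add, Nat.reduceAdd, h3, h2, h1]
  ring

end QuadraticDenominator

/-- Let `h_m` be the coefficient of `z^m` in
`(1-2x2 z)(1-(x1+x2)z)/((1-x2 z)(1-3x1 z))`.  Then for `r ≥ 2`,
`h_r·h_r - h_(r+1)·h_(r-1) = -3^(r-2)·(x2-2x1)·(x1x2)^(r-1)·(3x1-2x2)`. -/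
theorem schur_rr_factorization (r : ℕ) (hr : 2 ≤ r)
    (f : PowerSeries R7)
    (hf :
      ((1 - PowerSeries.C x₂ * PowerSeries.X) *
        (1 - PowerSeries.C (3 * x₁) * PowerSeries.X)) * f =
      (1 - PowerSeries.C (2 * x₂) * PowerSeries.X) *
        (1 - PowerSeries.C (x₁ + x₂) * PowerSeries.X)) :
    (PowerSeries.coeff r f) * (PowerSeries.coeff r f)
        - (PowerSeries.coeff (r+1) f) * (PowerSeries.coeff (r-1) f) =
      -(3:R7) ^ (r-2) * (x₂ - 2 * x₁) * (x₁ * x₂) ^ (r-1) * (3 * x₁ - 2 * x₂) := by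
  obtain ⟨n, rfl⟩ : ∃ n, r = n + 2 := ⟨r - 2, by omega⟩
  rw [Nat.add_sub_cancel, show n + 2 - 1 = n + 1 by omega, ← sq,
    coeff_sq_sub_coeff_mul_coeff_of_mul_eq hf n]
  ring

end
end

section
/- Let 𝔸 have m elements, 𝔹 have n elements, and let I = (i_1 ≤ ... ≤ i_m), J = (j_1 ≤ ... ≤ j_s) be partitions with at most m and s parts respectively. Then the factorization S_{(j_1,...,j_s, i_1+n, ..., i_m+n)}(𝔸 - 𝔹) = S_I(𝔸) · R(𝔸,𝔹) · S_J(-𝔹) holds, where R(𝔸,𝔹) = ∏_{a∈𝔸,b∈𝔹}(a-b), for the case m = 1: namely, for a single variable x, S_{(j_1,...,j_s, i+n)}(x - 𝔹) = x^i · ∏_{b∈𝔹}(x - b) · S_J(-𝔹). -/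
/-!
Write `g = ∏_b (1 - b z)`, so that `(1 - x z) f = g`. Then `f_k - x f_{k-1} = g_k` for every `k`,
`g_k = 0` for `k > n`, and `f_{n+m} = x^m ∏_b (x - b)` (peel off one factor `1 - b z` at a time).
Subtracting `x` times the next column from each of the first `s` columns of the Jacobi–Trudi matrix
of `(J, i + n)` leaves its determinant unchanged, turns the top-left `s × s` block into the
Jacobi–Trudi matrix of `J` for `g`, and kills the last row except its corner entry
`f_{i+n} = x^i ∏_b (x - b)`.
-/

noncomputable section

def Scoef {R : Type*} [CommRing R] (f : PowerSeries R) : ℤ → R :=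
  fun k => if k < 0 then 0 else PowerSeries.coeff k.toNat f

/-- The Jacobi–Trudi determinant `S_I = det(S_{i_p+p-q})_{1≤p,q≤s}`. -/
def schurJT {R : Type*} [CommRing R] (f : PowerSeries R) {s : ℕ} (I : Fin s → ℕ) : R :=
  (Matrix.of fun p q : Fin s => Scoef f ((I p : ℤ) + (p : ℤ) - (q : ℤ))).det

section

open PowerSeries Matrix

variable {R : Type*} [CommRing R] {s : ℕ}

theorem Scoef_natCast (f : R⟦X⟧) (k : ℕ) : Scoef f k = coeff k f := by
  simp [Scoef]

theorem Scoef_of_neg (f : R⟦X⟧) {k : ℤ} (hk : k < 0) : Scoef f k = 0 := if_pos hk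

theorem Scoef_one_sub_C_mul_X_mul (a : R) (h : R⟦X⟧) (k : ℤ) :
    Scoef ((1 - C a * X) * h) k = Scoef h k - a * Scoef h (k - 1) := by
  have hXh : (1 - C a * X) * h = h - C a * (X * h) := by ring
  rcases lt_or_ge k 0 with hk | hk
  · simp [Scoef_of_neg _ hk, Scoef_of_neg _ (show k - 1 < 0 by omega)]
  lift k to ℕ using hk
  cases k with
  | zero => simp [Scoef, hXh]
  | succ m =>
    rw [Nat.cast_succ, add_sub_cancel_right, ← Nat.cast_succ, Scoef_natCast, Scoef_natCast,
      Scoef_natCast, hXh]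
    simp [coeff_succ_X_mul]

theorem one_sub_C_mul_X_mul_mk_pow (a : R) : (1 - C a * X) * mk (a ^ ·) = 1 := by
  simpa [rescale_mk, rescale_X, mul_comm] using congr(rescale a $(mk_one_mul_one_sub_eq_one R))

theorem Scoef_prod_one_sub_C_mul_X_of_card_lt {ι : Type*} (t : Finset ι) (b : ι → R) {k : ℤ}
    (hk : t.card < k) : Scoef (∏ j ∈ t, (1 - C (b j) * X)) k = 0 := by
  induction t using Finset.cons_induction generalizing k with
  | empty =>
    simp only [Finset.card_empty, Nat.cast_zero] at hk
    lift k to ℕ using hk.le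
    simp [Scoef_natCast, coeff_one, Nat.pos_iff_ne_zero.mp (Int.natCast_pos.mp hk)]
  | cons a t ha ih =>
    rw [Finset.card_cons, Nat.cast_succ] at hk
    rw [Finset.prod_cons, Scoef_one_sub_C_mul_X_mul, ih (by omega), ih (by omega), mul_zero,
      sub_zero]

theorem Scoef_mk_pow_mul_prod_one_sub_C_mul_X {ι : Type*} (x : R) (t : Finset ι) (b : ι → R)
    (m : ℕ) :
    Scoef (mk (x ^ ·) * ∏ j ∈ t, (1 - C (b j) * X)) (t.card + m) =
      x ^ m * ∏ j ∈ t, (x - b j) := by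
  induction t using Finset.cons_induction generalizing m with
  | empty => simp [Scoef_natCast]
  | cons a t ha ih =>
    rw [Finset.prod_cons, Finset.prod_cons, mul_left_comm, Scoef_one_sub_C_mul_X_mul,
      Finset.card_cons, show ((t.card + 1 : ℕ) : ℤ) + m - 1 = t.card + m by push_cast; ring,
      show ((t.card + 1 : ℕ) : ℤ) + m = t.card + (m + 1 : ℕ) by push_cast; ring, ih, ih]
    ring

theorem Matrix.det_of_sub_mul_next_column (M : Matrix (Fin (s + 1)) (Fin (s + 1)) R) (x : R) :
    (of fun p => Fin.lastCases (M p (Fin.last s)) fun q => M p q.castSucc - x * M p q.succ).det =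
      M.det := by
  let S : Matrix (Fin (s + 1)) (Fin (s + 1)) R := of fun r q => if (r : ℕ) = q + 1 then 1 else 0
  have hdet : (1 - x • S).det = 1 := by
    rw [det_of_isLowerTriangular _ fun r q (hrq : r < q) => ?_]
    · simp [S]
    · simp [S, hrq.ne, show (r : ℕ) ≠ q + 1 by omega]
  have hmul : (of fun p => Fin.lastCases (M p (Fin.last s)) fun q =>
      M p q.castSucc - x * M p q.succ) = M * (1 - x • S) := by
    rw [Matrix.mul_sub, Matrix.mul_one, Matrix.mul_smul]
    ext p q
    induction q using Fin.lastCases with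
    | last => simp [mul_apply, S, show ∀ r : Fin (s + 1), (r : ℕ) ≠ s + 1 by omega]
    | cast q =>
      have hsucc (r : Fin (s + 1)) : (r : ℕ) = q + 1 ↔ r = q.succ := by simp [Fin.ext_iff]
      simp [mul_apply, S, hsucc]
  rw [hmul, det_mul, hdet, mul_one]

theorem Matrix.det_succ_of_last_row_eq_zero (N : Matrix (Fin (s + 1)) (Fin (s + 1)) R)
    (h : ∀ q : Fin s, N (Fin.last s) q.castSucc = 0) :
    N.det = N (Fin.last s) (Fin.last s) * (N.submatrix Fin.castSucc Fin.castSucc).det := by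
  rw [det_succ_row N (Fin.last s), Fin.sum_univ_castSucc]
  simp [h, Fin.succAbove_last]

theorem schurJT_snoc_eq_pow_mul_prod_mul_schurJT {n : ℕ} (i : ℕ) (J : Fin s → ℕ) (x : R)
    (b : Fin n → R) (f : R⟦X⟧) (hf : (1 - C x * X) * f = ∏ j, (1 - C (b j) * X)) :
    schurJT f (Fin.snoc J (i + n)) =
      x ^ i * (∏ j, (x - b j)) * schurJT (∏ j, (1 - C (b j) * X)) J := by
  set g : R⟦X⟧ := ∏ j, (1 - C (b j) * X)
  have hdiff (k : ℤ) : Scoef f k - x * Scoef f (k - 1) = Scoef g k := by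
    rw [← hf, Scoef_one_sub_C_mul_X_mul]
  have htail : Scoef f (n + i) = x ^ i * ∏ j, (x - b j) := by
    have hfg : f = mk (x ^ ·) * g := by
      rw [← hf, ← mul_assoc, mul_comm (mk _), one_sub_C_mul_X_mul_mk_pow, one_mul]
    simpa [hfg] using Scoef_mk_pow_mul_prod_one_sub_C_mul_X x Finset.univ b i
  unfold schurJT
  rw [← det_of_sub_mul_next_column _ x, det_succ_of_last_row_eq_zero]
  · congr 1
    · simpa [add_comm] using htail
    · congr 1
      ext p q
      simp only [submatrix_apply, of_apply, Fin.lastCases_castSucc, Fin.snoc_castSucc]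
      rw [← hdiff, Fin.val_castSucc, Fin.val_castSucc, Fin.val_succ, Nat.cast_succ,
        sub_add_eq_sub_sub]
  · intro q
    have hq : (q : ℤ) < s := by exact_mod_cast q.isLt
    simp only [of_apply, Fin.lastCases_castSucc, Fin.snoc_last]
    rw [Fin.val_castSucc, Fin.val_succ, Nat.cast_succ, Fin.val_last, sub_add_eq_sub_sub, hdiff]
    exact Scoef_prod_one_sub_C_mul_X_of_card_lt _ b (by rw [Finset.card_fin]; push_cast; omega)

end

theorem schur_factorization_general (n s : ℕ) (i : ℕ) (J : Fin s → ℕ)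
    (f : PowerSeries (MvPolynomial (Option (Fin n)) ℤ))
    (hf :
      (1 - PowerSeries.C (MvPolynomial.X none) * PowerSeries.X) * f =
        ∏ j : Fin n,
          (1 - PowerSeries.C (MvPolynomial.X (some j)) * PowerSeries.X)) :
    schurJT f (Fin.snoc J (i + n)) =
      (MvPolynomial.X none : MvPolynomial (Option (Fin n)) ℤ) ^ i *
        (∏ j : Fin n, (MvPolynomial.X none - MvPolynomial.X (some j))) *
        schurJT
          (∏ j : Fin n,
            (1 - PowerSeries.C (MvPolynomial.X (some j)) * PowerSeries.X)) J :=
  schurJT_snoc_eq_pow_mul_prod_mul_schurJT i J _ _ f hf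

/-- Factorization property (case `m = 1`): for a single variable `x`, an `n`-letter
alphabet `𝔹` and a partition `J = (j_1 ≤ … ≤ j_s)` with `j_s ≤ i + n`,
`S_{(j_1,…,j_s,i+n)}(x-𝔹) = x^i · ∏_{b∈𝔹}(x-b) · S_J(-𝔹)`. -/
theorem schur_factorization (n s : ℕ) (i : ℕ) (J : Fin s → ℕ) (hJ : Monotone J)
    (hJK : ∀ p, J p ≤ i + n)
    (f : PowerSeries (MvPolynomial (Option (Fin n)) ℤ))
    (hf :
      (1 - PowerSeries.C (MvPolynomial.X none) * PowerSeries.X) * f =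
        ∏ j : Fin n,
          (1 - PowerSeries.C (MvPolynomial.X (some j)) * PowerSeries.X)) :
    schurJT f (Fin.snoc J (i + n)) =
      (MvPolynomial.X none : MvPolynomial (Option (Fin n)) ℤ) ^ i *
        (∏ j : Fin n, (MvPolynomial.X none - MvPolynomial.X (some j))) *
        schurJT
          (∏ j : Fin n,
            (1 - PowerSeries.C (MvPolynomial.X (some j)) * PowerSeries.X)) J :=
  schur_factorization_general n s i J f hf

end
end

section
/- Fix a commutative ring R and y ∈ R. Define the Pascal staircase p : ℕ → ℕ → R by first column p(s,1) = y^(s-1) for s ≥ 1, boundary zeros p(s,t) = 0 whenever t ≥ 2 and s ≤ 2t - 2, and recurrence p(s+1,t) = p(s,t-1) + p(s,t) for t ≥ 2, s+1 ≥ 2t - 1. For variables x1, x2 let S_{(j,m)}(x1,x2) denote the two-variable Schur polynomials for j ≤ m, and let h_n(x1,x2) be the complete homogeneous symmetric polynomial. Then for every n ≥ 1, W(n) := ∑_{j≥0} p(n+1, j+1)·S_{(j,n-j)}(x1,x2) - (x1+x2)·∑_{j≥0} p(n, j+1)·S_{(j,n-1-j)}(x1,x2) equals (y-1)·y^(n-1)·h_n(x1,x2).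 -/
open Finset

/-- Two-variable Schur polynomial `S_{(j,m)}(x1,x2) = (x1x2)^j·h_{m-j}(x1,x2)` for
`j ≤ m`, and `0` otherwise. -/
def Spoly {R : Type*} [CommRing R] (x₁ x₂ : R) (j m : ℕ) : R :=
  if j ≤ m then x₁ ^ j * x₂ ^ j * ∑ t ∈ Finset.range (m - j + 1), x₁ ^ t * x₂ ^ (m - j - t)
  else 0

/-- Complete homogeneous polynomial `h_n(x1,x2)`. -/
def hpoly {R : Type*} [CommRing R] (x₁ x₂ : R) (n : ℕ) : R :=
  ∑ t ∈ Finset.range (n+1), x₁ ^ t * x₂ ^ (n - t)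

lemma Spoly_of_le {R : Type*} [CommRing R] (x₁ x₂ : R) {j m : ℕ} (h : j ≤ m) :
    Spoly x₁ x₂ j m = x₁ ^ j * x₂ ^ j * hpoly x₁ x₂ (m - j) := by
  rw [Spoly, if_pos h]; rfl

lemma Spoly_of_gt {R : Type*} [CommRing R] (x₁ x₂ : R) {j m : ℕ} (h : m < j) :
    Spoly x₁ x₂ j m = 0 := by
  rw [Spoly, if_neg (by omega)]

lemma hpoly_zero {R : Type*} [CommRing R] (x₁ x₂ : R) : hpoly x₁ x₂ 0 = 1 := by
  simp [hpoly]

lemma hpoly_r {R : Type*} [CommRing R] (x₁ x₂ : R) (n : ℕ) :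
    hpoly x₁ x₂ (n+1) = x₁ ^ (n+1) + x₂ * hpoly x₁ x₂ n := by
  rw [hpoly, Finset.sum_range_succ, add_comm]
  congr 1
  · simp
  · rw [hpoly, Finset.mul_sum]
    refine Finset.sum_congr rfl fun i hi => ?_
    have hi' : i ≤ n := by simpa [Nat.lt_succ_iff] using Finset.mem_range.mp hi
    rw [show n + 1 - i = (n - i) + 1 by omega, pow_succ]
    ring

lemma hrec' {R : Type*} [CommRing R] (x₁ x₂ : R) (n : ℕ) :
    (x₁ + x₂) * hpoly x₁ x₂ (n+1) = hpoly x₁ x₂ (n+2) + x₁ * x₂ * hpoly x₁ x₂ n := by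
  have h1 := hpoly_r x₁ x₂ (n+1)
  have h2 := hpoly_r x₁ x₂ n
  linear_combination -h1 + x₁ * h2

/-- Pieri rule in two variables: `(x₁+x₂)·S_{(j,m)} = S_{(j,m+1)} + S_{(j+1,m)}` for `j ≤ m`. -/
lemma pieri {R : Type*} [CommRing R] (x₁ x₂ : R) {j m : ℕ} (h : j ≤ m) :
    (x₁ + x₂) * Spoly x₁ x₂ j m = Spoly x₁ x₂ j (m+1) + Spoly x₁ x₂ (j+1) m := by
  obtain ⟨k, rfl⟩ := Nat.exists_eq_add_of_le h
  rw [Spoly_of_le x₁ x₂ (show j ≤ j + k by omega),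
      Spoly_of_le x₁ x₂ (show j ≤ j + k + 1 by omega),
      show j + k - j = k by omega, show j + k + 1 - j = k + 1 by omega]
  cases k with
  | zero =>
    rw [Spoly_of_gt x₁ x₂ (show j + 0 < j + 1 by omega), hpoly_zero]
    simp [hpoly, Finset.sum_range_succ]
    ring
  | succ k =>
    rw [Spoly_of_le x₁ x₂ (show j + 1 ≤ j + (k+1) by omega),
        show j + (k+1) - (j+1) = k by omega]
    have := hrec' x₁ x₂ k
    linear_combination (x₁ ^ j * x₂ ^ j) * this

/-- Pascal staircase with first column `p(s,1) = y^(s-1)`: for all `n ≥ 1`,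
`W(n) = ∑_j p(n+1,j+1)·S_{(j,n-j)} - (x1+x2)·∑_j p(n,j+1)·S_{(j,n-1-j)}
      = (y-1)·y^(n-1)·h_n(x1,x2)`. -/
theorem pascal_staircase_W {R : Type*} [CommRing R] (y x₁ x₂ : R)
    (p : ℕ → ℕ → R)
    (hcol : ∀ s, 1 ≤ s → p s 1 = y ^ (s-1))
    (hzero : ∀ s t, 2 ≤ t → s ≤ 2*t - 2 → p s t = 0)
    (hrec : ∀ s t, 2 ≤ t → 2*t - 1 ≤ s + 1 → p (s+1) t = p s (t-1) + p s t) :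
    ∀ n : ℕ, 1 ≤ n →
      (∑ j ∈ Finset.range (n+1), p (n+1) (j+1) * Spoly x₁ x₂ j (n-j))
          - (x₁ + x₂) * (∑ j ∈ Finset.range (n+1), p n (j+1) * Spoly x₁ x₂ j (n-1-j)) =
        (y - 1) * y ^ (n-1) * hpoly x₁ x₂ n := by
  intro n hn
  -- Step 1: apply Pieri to the second sum
  have hB : (x₁ + x₂) * (∑ j ∈ Finset.range (n+1), p n (j+1) * Spoly x₁ x₂ j (n-1-j))
      = (∑ j ∈ Finset.range (n+1), p n (j+1) * Spoly x₁ x₂ j (n-j))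
        + ∑ j ∈ Finset.range n, p n (j+1) * Spoly x₁ x₂ (j+1) (n-(j+1)) := by
    rw [Finset.mul_sum]
    have expand : ∀ j ∈ Finset.range (n+1),
        (x₁ + x₂) * (p n (j+1) * Spoly x₁ x₂ j (n-1-j))
          = p n (j+1) * Spoly x₁ x₂ j (n-j) + p n (j+1) * Spoly x₁ x₂ (j+1) (n-1-j) := by
      intro j hj
      rcases le_or_gt (2*j+1) n with hle | hgt
      · have hjm : j ≤ n - 1 - j := by omega
        have := pieri x₁ x₂ hjm
        rw [show n - 1 - j + 1 = n - j by omega] at this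
        rw [mul_left_comm, this, mul_add]
      · -- here 2*j ≥ n, so the Schur terms vanish (or the coefficient does)
        have z1 : Spoly x₁ x₂ j (n-1-j) = 0 := Spoly_of_gt x₁ x₂ (by omega)
        have z3 : Spoly x₁ x₂ (j+1) (n-1-j) = 0 := Spoly_of_gt x₁ x₂ (by omega)
        rcases eq_or_lt_of_le (show n ≤ 2*j by omega) with heq | hlt
        · have z2 : p n (j+1) = 0 := hzero n (j+1) (by omega) (by omega)
          rw [z1, z2, z3]; ring
        · have z2 : Spoly x₁ x₂ j (n-j) = 0 := Spoly_of_gt x₁ x₂ (by omega)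
          rw [z1, z2, z3]; ring
    rw [Finset.sum_congr rfl expand, Finset.sum_add_distrib]
    congr 1
    rw [Finset.sum_range_succ, Spoly_of_gt x₁ x₂ (show n - 1 - n < n + 1 by omega),
        mul_zero, add_zero]
    exact Finset.sum_congr rfl fun j hj => by rw [show n - 1 - j = n - (j+1) by omega]
  rw [hB]
  -- Step 2: combine the two sums over range (n+1), splitting off j = 0
  have hA : (∑ j ∈ Finset.range (n+1), p (n+1) (j+1) * Spoly x₁ x₂ j (n-j))
      - (∑ j ∈ Finset.range (n+1), p n (j+1) * Spoly x₁ x₂ j (n-j))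
      = (p (n+1) 1 - p n 1) * Spoly x₁ x₂ 0 n
        + ∑ j ∈ Finset.range n, (p (n+1) (j+2) - p n (j+2)) * Spoly x₁ x₂ (j+1) (n-(j+1)) := by
    rw [← Finset.sum_sub_distrib, Finset.sum_range_succ']
    rw [add_comm]
    congr 1
    · rw [sub_mul, Nat.sub_zero]
    · exact Finset.sum_congr rfl fun j hj => by rw [sub_mul]
  -- Step 3: the staircase recurrence kills all terms with j ≥ 1
  have key : ∑ j ∈ Finset.range n, ((p (n+1) (j+2) - p n (j+2)) * Spoly x₁ x₂ (j+1) (n-(j+1))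
      - p n (j+1) * Spoly x₁ x₂ (j+1) (n-(j+1))) = 0 := by
    refine Finset.sum_eq_zero fun j hj => ?_
    rcases le_or_gt (2*(j+1)) n with h | h
    · have hr := hrec n (j+2) (by omega) (by omega)
      rw [show j + 2 - 1 = j + 1 from rfl] at hr
      rw [hr]; ring
    · rw [Spoly_of_gt x₁ x₂ (show n - (j+1) < j + 1 by omega)]; ring
  have final : (∑ j ∈ Finset.range (n+1), p (n+1) (j+1) * Spoly x₁ x₂ j (n-j))
      - ((∑ j ∈ Finset.range (n+1), p n (j+1) * Spoly x₁ x₂ j (n-j))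
        + ∑ j ∈ Finset.range n, p n (j+1) * Spoly x₁ x₂ (j+1) (n-(j+1)))
      = (p (n+1) 1 - p n 1) * Spoly x₁ x₂ 0 n := by
    rw [sub_add_eq_sub_sub, hA, add_sub_assoc, ← Finset.sum_sub_distrib, key, add_zero]
  rw [final, hcol (n+1) (by omega), hcol n hn, Nat.add_sub_cancel,
      Spoly_of_le x₁ x₂ (Nat.zero_le n), Nat.sub_zero]
  have hy : y ^ n = y * y ^ (n-1) := by
    rw [← pow_succ']; congr 1; omega
  rw [hy]; ring
end
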